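/- If B_i and B_j are two elementary blocks of a Boolean network with disjoint node sets, then the attractors of the merged block B_{i,j} are exactly the cross products Π(A^{B_i}, A^{B_j}) over pairs of attractors A^{B_i} of B_i and A^{B_j} of B_j, where Π pairs up states agreeing on shared nodes (here: all combinations since the node sets are disjoint). -/
import Mathlib


open Classical

/-- Asynchronous transition of a Boolean network `f`: exactly one node `i` is
updated to `f i x`, all other nodes keep their value. -/
def Step {V : Type*} (f : V → (V → Bool) → Bool) (x y : V → Bool) : Prop :=
  ∃ i, y i = f i x ∧ ∀ j, j ≠ i → y j = x j

/-- `g` depends only on the coordinates in `B`. -/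
def DependsOnlyOn {V : Type*} (g : (V → Bool) → Bool) (B : Set V) : Prop :=
  ∀ x y : V → Bool, (∀ v ∈ B, x v = y v) → g x = g y

/-- An elementary block: a set of nodes that is parent-closed, i.e. the update
function of every node of `B` depends only on nodes of `B`. -/
def Elementary {V : Type*} (f : V → (V → Bool) → Bool) (B : Set V) : Prop :=
  ∀ i ∈ B, DependsOnlyOn (f i) B

/-- Canonical representatives of block states: full states that are `false`
outside the block. -/
def ProjStates {V : Type*} (B : Set V) : Set (V → Bool) :=
  {x | ∀ v ∉ B, x v = false}

/-- Projection of a full state onto a block `B` (canonical representative). -/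
noncomputable def proj {V : Type*} (B : Set V) (x : V → Bool) : V → Bool :=
  fun v => if v ∈ B then x v else false

/-- Asynchronous transition of the block `B` (on canonical block states):
exactly one node `i ∈ B` is updated according to its Boolean function. -/
def BStep {V : Type*} (f : V → (V → Bool) → Bool) (B : Set V) (x y : V → Bool) : Prop :=
  x ∈ ProjStates B ∧ y ∈ ProjStates B ∧
    ∃ i ∈ B, y i = f i x ∧ ∀ j, j ≠ i → y j = x j

/-- An attractor of a transition relation `R`: a nonempty set of mutually
reachable states from which no outside state is reachable. -/
def IsAttractor {α : Type*} (R : α → α → Prop) (A : Set α) : Prop :=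
  A.Nonempty ∧ (∀ x ∈ A, ∀ y ∈ A, Relation.ReflTransGen R x y) ∧
    ∀ x ∈ A, ∀ y, Relation.ReflTransGen R x y → y ∈ A

/-- An attractor of the block `B` of the Boolean network `f`. -/
def IsBlockAttr {V : Type*} (f : V → (V → Bool) → Bool) (B : Set V)
    (A : Set (V → Bool)) : Prop :=
  A ⊆ ProjStates B ∧ IsAttractor (BStep f B) A

/-- Two block states (of blocks `B₁`, `B₂`) are crossable if they agree on the
shared nodes. -/
def StateCrossable {V : Type*} (B₁ B₂ : Set V) (x y : V → Bool) : Prop :=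
  ∀ v ∈ B₁ ∩ B₂, x v = y v

/-- The cross (glue) of two crossable block states. -/
noncomputable def crossState {V : Type*} (B₁ B₂ : Set V) (x y : V → Bool) : V → Bool :=
  fun v => if v ∈ B₁ then x v else if v ∈ B₂ then y v else false

/-- Two sets of block states are crossable if every state of either set is
crossable with some state of the other. -/
def SetCrossable {V : Type*} (B₁ B₂ : Set V) (A₁ A₂ : Set (V → Bool)) : Prop :=
  (∀ x ∈ A₁, ∃ y ∈ A₂, StateCrossable B₁ B₂ x y) ∧
    (∀ y ∈ A₂, ∃ x ∈ A₁, StateCrossable B₁ B₂ x y)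

/-- The cross operation on two sets of block states. -/
def crossSet {V : Type*} (B₁ B₂ : Set V) (A₁ A₂ : Set (V → Bool)) :
    Set (V → Bool) :=
  {m | ∃ x ∈ A₁, ∃ y ∈ A₂, StateCrossable B₁ B₂ x y ∧ m = crossState B₁ B₂ x y}

/-- The cross operation on two families of attractors: cross all crossable
pairs. -/
def crossFam {V : Type*} (B₁ B₂ : Set V) (F₁ F₂ : Set (Set (V → Bool))) :
    Set (Set (V → Bool)) :=
  {M | ∃ A₁ ∈ F₁, ∃ A₂ ∈ F₂, SetCrossable B₁ B₂ A₁ A₂ ∧ M = crossSet B₁ B₂ A₁ A₂}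

section Helpers

variable {V : Type*} {f : V → (V → Bool) → Bool} {B₁ B₂ : Set V}

lemma proj_mem_projStates (B : Set V) (x : V → Bool) : proj B x ∈ ProjStates B :=
  fun _ hv => if_neg hv

lemma proj_eq_of_mem {B : Set V} {x : V → Bool} (hx : x ∈ ProjStates B) : proj B x = x := by
  funext v
  by_cases h : v ∈ B
  · simp [proj, h]
  · simp [proj, h, hx v h]

lemma crossable_of_disjoint (hd : Disjoint B₁ B₂) (x y : V → Bool) :
    StateCrossable B₁ B₂ x y := by
  intro v hv
  exact absurd hv (by simp [Set.disjoint_iff_inter_eq_empty.mp hd])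

lemma cross_mem {a b : V → Bool} (ha : a ∈ ProjStates B₁) (hb : b ∈ ProjStates B₂) :
    crossState B₁ B₂ a b ∈ ProjStates (B₁ ∪ B₂) := by
  intro v hv
  simp only [Set.mem_union, not_or] at hv
  simp [crossState, hv.1, hv.2]

lemma proj₁_cross {a : V → Bool} (b : V → Bool) (ha : a ∈ ProjStates B₁) :
    proj B₁ (crossState B₁ B₂ a b) = a := by
  funext v
  by_cases h : v ∈ B₁
  · simp [proj, crossState, h]
  · simp [proj, h, ha v h]

lemma proj₂_cross (hd : Disjoint B₁ B₂) (a : V → Bool) {b : V → Bool}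
    (hb : b ∈ ProjStates B₂) : proj B₂ (crossState B₁ B₂ a b) = b := by
  funext v
  by_cases h : v ∈ B₂
  · have h1 : v ∉ B₁ := Set.disjoint_right.mp hd h
    simp [proj, crossState, h, h1]
  · simp [proj, h, hb v h]

lemma cross_proj {x : V → Bool} (hx : x ∈ ProjStates (B₁ ∪ B₂)) :
    crossState B₁ B₂ (proj B₁ x) (proj B₂ x) = x := by
  funext v
  by_cases h1 : v ∈ B₁
  · simp [crossState, proj, h1]
  · by_cases h2 : v ∈ B₂
    · simp [crossState, proj, h1, h2]
    · simp [crossState, proj, h1, h2, hx v (by simp [h1, h2])]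

lemma step_decomp (h₁ : Elementary f B₁) (h₂ : Elementary f B₂) (hd : Disjoint B₁ B₂)
    {x y : V → Bool} (h : BStep f (B₁ ∪ B₂) x y) :
    (BStep f B₁ (proj B₁ x) (proj B₁ y) ∧ proj B₂ y = proj B₂ x) ∨
    (BStep f B₂ (proj B₂ x) (proj B₂ y) ∧ proj B₁ y = proj B₁ x) := by
  obtain ⟨hx, hy, i, hi, hval, hoth⟩ := h
  rcases hi with hi | hi
  · left
    have hfi : f i (proj B₁ x) = f i x := h₁ i hi _ _ (fun v hv => by simp [proj, hv])
    refine ⟨⟨proj_mem_projStates _ _, proj_mem_projStates _ _, i, hi, ?_, ?_⟩, ?_⟩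
    · simp [proj, hi, hval, hfi]
    · intro j hj
      by_cases hjB : j ∈ B₁ <;> simp [proj, hjB, hoth j hj]
    · funext v
      by_cases hv : v ∈ B₂
      · have hne : v ≠ i := fun e => (Set.disjoint_left.mp hd hi) (e ▸ hv)
        simp [proj, hv, hoth v hne]
      · simp [proj, hv]
  · right
    have hfi : f i (proj B₂ x) = f i x := h₂ i hi _ _ (fun v hv => by simp [proj, hv])
    refine ⟨⟨proj_mem_projStates _ _, proj_mem_projStates _ _, i, hi, ?_, ?_⟩, ?_⟩
    · simp [proj, hi, hval, hfi]
    · intro j hj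
      by_cases hjB : j ∈ B₂ <;> simp [proj, hjB, hoth j hj]
    · funext v
      by_cases hv : v ∈ B₁
      · have hne : v ≠ i := fun e => (Set.disjoint_right.mp hd hi) (e ▸ hv)
        simp [proj, hv, hoth v hne]
      · simp [proj, hv]

lemma step_lift₁ (h₁ : Elementary f B₁) {a b c : V → Bool}
    (hab : BStep f B₁ a b) (hc : c ∈ ProjStates B₂) :
    BStep f (B₁ ∪ B₂) (crossState B₁ B₂ a c) (crossState B₁ B₂ b c) := by
  obtain ⟨ha, hb, i, hi, hval, hoth⟩ := hab
  refine ⟨cross_mem ha hc, cross_mem hb hc, i, Or.inl hi, ?_, ?_⟩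
  · have hfi : f i (crossState B₁ B₂ a c) = f i a :=
      h₁ i hi _ _ (fun v hv => by simp [crossState, hv])
    simp [crossState, hi, hfi, hval]
  · intro j hj
    by_cases hjB : j ∈ B₁ <;> simp [crossState, hjB, hoth j hj]

lemma step_lift₂ (h₂ : Elementary f B₂) (hd : Disjoint B₁ B₂) {a c d : V → Bool}
    (hcd : BStep f B₂ c d) (ha : a ∈ ProjStates B₁) :
    BStep f (B₁ ∪ B₂) (crossState B₁ B₂ a c) (crossState B₁ B₂ a d) := by
  obtain ⟨hc, hd', i, hi, hval, hoth⟩ := hcd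
  have hiB : i ∉ B₁ := Set.disjoint_right.mp hd hi
  refine ⟨cross_mem ha hc, cross_mem ha hd', i, Or.inr hi, ?_, ?_⟩
  · have hfi : f i (crossState B₁ B₂ a c) = f i c :=
      h₂ i hi _ _ (fun v hv => by
        have hv1 : v ∉ B₁ := Set.disjoint_right.mp hd hv
        simp [crossState, hv1, hv])
    simp [crossState, hiB, hi, hfi, hval]
  · intro j hj
    by_cases h1 : j ∈ B₁
    · simp [crossState, h1]
    · by_cases h2 : j ∈ B₂ <;> simp [crossState, h1, h2, hoth j hj]

lemma bstep_mem_right {B : Set V} {x y : V → Bool} (h : BStep f B x y) :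
    y ∈ ProjStates B := h.2.1

lemma reach_projStates {B : Set V} {x y : V → Bool}
    (h : Relation.ReflTransGen (BStep f B) x y) (hx : x ∈ ProjStates B) :
    y ∈ ProjStates B := by
  induction h with
  | refl => exact hx
  | tail _ hstep ih => exact hstep.2.1

lemma reach_decomp (h₁ : Elementary f B₁) (h₂ : Elementary f B₂) (hd : Disjoint B₁ B₂)
    {x y : V → Bool} (h : Relation.ReflTransGen (BStep f (B₁ ∪ B₂)) x y) :
    Relation.ReflTransGen (BStep f B₁) (proj B₁ x) (proj B₁ y) ∧
    Relation.ReflTransGen (BStep f B₂) (proj B₂ x) (proj B₂ y) := by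
  induction h with
  | refl => exact ⟨Relation.ReflTransGen.refl, Relation.ReflTransGen.refl⟩
  | tail _ hstep ih =>
    rcases step_decomp h₁ h₂ hd hstep with ⟨hs, heq⟩ | ⟨hs, heq⟩
    · exact ⟨ih.1.tail hs, heq ▸ ih.2⟩
    · exact ⟨heq ▸ ih.1, ih.2.tail hs⟩

lemma reach_lift₁ (h₁ : Elementary f B₁) {a b c : V → Bool}
    (hab : Relation.ReflTransGen (BStep f B₁) a b) (hc : c ∈ ProjStates B₂) :
    Relation.ReflTransGen (BStep f (B₁ ∪ B₂)) (crossState B₁ B₂ a c) (crossState B₁ B₂ b c) := by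
  induction hab with
  | refl => exact Relation.ReflTransGen.refl
  | tail _ hstep ih => exact ih.tail (step_lift₁ h₁ hstep hc)

lemma reach_lift₂ (h₂ : Elementary f B₂) (hd : Disjoint B₁ B₂) {a c d : V → Bool}
    (hcd : Relation.ReflTransGen (BStep f B₂) c d) (ha : a ∈ ProjStates B₁) :
    Relation.ReflTransGen (BStep f (B₁ ∪ B₂)) (crossState B₁ B₂ a c) (crossState B₁ B₂ a d) := by
  induction hcd with
  | refl => exact Relation.ReflTransGen.refl
  | tail _ hstep ih => exact ih.tail (step_lift₂ h₂ hd hstep ha)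

end Helpers

/-- For two disjoint elementary blocks, the attractors of the merged block are
exactly the crosses (products) of pairs of attractors of the two blocks. -/
theorem merged_attractors_of_disjoint_elementary {V : Type*} [Fintype V]
    (f : V → (V → Bool) → Bool) (B₁ B₂ : Set V)
    (h₁ : Elementary f B₁) (h₂ : Elementary f B₂) (hd : Disjoint B₁ B₂) :
    {M : Set (V → Bool) | IsBlockAttr f (B₁ ∪ B₂) M} =
      {M : Set (V → Bool) | ∃ A₁ : Set (V → Bool), IsBlockAttr f B₁ A₁ ∧
        ∃ A₂ : Set (V → Bool), IsBlockAttr f B₂ A₂ ∧ M = crossSet B₁ B₂ A₁ A₂} := by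
  ext M
  simp only [Set.mem_setOf_eq]
  constructor
  · rintro ⟨hMsub, hMne, hMmut, hMcl⟩
    refine ⟨proj B₁ '' M, ?_, proj B₂ '' M, ?_, ?_⟩
    · refine ⟨?_, ?_, ?_, ?_⟩
      · rintro _ ⟨m, _, rfl⟩; exact proj_mem_projStates _ _
      · exact hMne.image _
      · rintro _ ⟨m, hm, rfl⟩ _ ⟨m', hm', rfl⟩
        exact (reach_decomp h₁ h₂ hd (hMmut m hm m' hm')).1
      · rintro _ ⟨m, hm, rfl⟩ b hb
        have hmeq : crossState B₁ B₂ (proj B₁ m) (proj B₂ m) = m := cross_proj (hMsub hm)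
        have hreach := reach_lift₁ (B₂ := B₂) h₁ hb (proj_mem_projStates B₂ m)
        rw [hmeq] at hreach
        have hin : crossState B₁ B₂ b (proj B₂ m) ∈ M := hMcl m hm _ hreach
        have hbP : b ∈ ProjStates B₁ := reach_projStates hb (proj_mem_projStates _ _)
        exact ⟨_, hin, proj₁_cross _ hbP⟩
    · refine ⟨?_, ?_, ?_, ?_⟩
      · rintro _ ⟨m, _, rfl⟩; exact proj_mem_projStates _ _
      · exact hMne.image _
      · rintro _ ⟨m, hm, rfl⟩ _ ⟨m', hm', rfl⟩
        exact (reach_decomp h₁ h₂ hd (hMmut m hm m' hm')).2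
      · rintro _ ⟨m, hm, rfl⟩ b hb
        have hmeq : crossState B₁ B₂ (proj B₁ m) (proj B₂ m) = m := cross_proj (hMsub hm)
        have hreach := reach_lift₂ (B₁ := B₁) h₂ hd hb (proj_mem_projStates B₁ m)
        rw [hmeq] at hreach
        have hin : crossState B₁ B₂ (proj B₁ m) b ∈ M := hMcl m hm _ hreach
        have hbP : b ∈ ProjStates B₂ := reach_projStates hb (proj_mem_projStates _ _)
        exact ⟨_, hin, proj₂_cross hd _ hbP⟩
    · apply Set.Subset.antisymm
      · intro m hm
        exact ⟨proj B₁ m, ⟨m, hm, rfl⟩, proj B₂ m, ⟨m, hm, rfl⟩,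
          crossable_of_disjoint hd _ _, (cross_proj (hMsub hm)).symm⟩
      · rintro z ⟨_, ⟨m₁, hm₁, rfl⟩, _, ⟨m₂, hm₂, rfl⟩, -, rfl⟩
        have hr : Relation.ReflTransGen (BStep f B₂) (proj B₂ m₁) (proj B₂ m₂) :=
          (reach_decomp h₁ h₂ hd (hMmut m₁ hm₁ m₂ hm₂)).2
        have hreach := reach_lift₂ (B₁ := B₁) h₂ hd hr (proj_mem_projStates B₁ m₁)
        rw [cross_proj (hMsub hm₁)] at hreach
        exact hMcl m₁ hm₁ _ hreach
  · rintro ⟨A₁, ⟨hA₁sub, hA₁ne, hA₁mut, hA₁cl⟩, A₂, ⟨hA₂sub, hA₂ne, hA₂mut, hA₂cl⟩, rfl⟩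
    refine ⟨?_, ?_, ?_, ?_⟩
    · rintro _ ⟨x, hx, y, hy, -, rfl⟩
      exact cross_mem (hA₁sub hx) (hA₂sub hy)
    · obtain ⟨x₀, hx₀⟩ := hA₁ne
      obtain ⟨y₀, hy₀⟩ := hA₂ne
      exact ⟨_, x₀, hx₀, y₀, hy₀, crossable_of_disjoint hd _ _, rfl⟩
    · rintro _ ⟨x, hx, y, hy, -, rfl⟩ _ ⟨x', hx', y', hy', -, rfl⟩
      have r1 := reach_lift₁ (B₂ := B₂) h₁ (hA₁mut x hx x' hx') (hA₂sub hy)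
      have r2 := reach_lift₂ (B₁ := B₁) h₂ hd (hA₂mut y hy y' hy') (hA₁sub hx')
      exact r1.trans r2
    · rintro _ ⟨x, hx, y, hy, -, rfl⟩ z hz
      have hdec := reach_decomp h₁ h₂ hd hz
      rw [proj₁_cross _ (hA₁sub hx), proj₂_cross hd _ (hA₂sub hy)] at hdec
      have hz1 : proj B₁ z ∈ A₁ := hA₁cl x hx _ hdec.1
      have hz2 : proj B₂ z ∈ A₂ := hA₂cl y hy _ hdec.2
      have hzP : z ∈ ProjStates (B₁ ∪ B₂) :=
        reach_projStates hz (cross_mem (hA₁sub hx) (hA₂sub hy))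
      exact ⟨_, hz1, _, hz2, crossable_of_disjoint hd _ _, (cross_proj hzP).symm⟩
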